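/- arXiv:2504.05659 — 9 statements merged into one kernel-verified Lean document; each statement's English description precedes it below -/
import Mathlib

section
/- Let K be a field and let A₀, A₁, B₀, B₁ be n×n matrices over K satisfying (R2) A₀·B₁ + A₁·B₀ = 0 and (R4) B₀·A₁ + B₁·A₀ = 0. If a row vector v satisfies v·(B₀·A₀) = λ·v and a column vector u satisfies (A₀·B₀)·u = λ'·u, then (λ − λ')·(v·(B₁·u)) = 0; in particular, if λ ≠ λ' then v·B₁·u = 0. -/
open Matrix

/-- Under (R2) `A₀·B₁ + A₁·B₀ = 0` and (R4) `B₀·A₁ + B₁·A₀ = 0`, if `v` is a left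
eigenvector of `B₀·A₀` with eigenvalue `λ` and `u` is a right eigenvector of `A₀·B₀`
with eigenvalue `λ'`, then `(λ − λ')·(v·(B₁·u)) = 0`; in particular, if `λ ≠ λ'`
then `v·B₁·u = 0`. -/
theorem stmt_2 {K : Type*} [Field K] {n : Type*} [Fintype n] [DecidableEq n]
    (A₀ A₁ B₀ B₁ : Matrix n n K)
    (hR2 : A₀ * B₁ + A₁ * B₀ = 0)
    (hR4 : B₀ * A₁ + B₁ * A₀ = 0)
    (v u : n → K) (lam lam' : K)
    (hv : v ᵥ* (B₀ * A₀) = lam • v)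
    (hu : (A₀ * B₀) *ᵥ u = lam' • u) :
    (lam - lam') * (v ⬝ᵥ (B₁ *ᵥ u)) = 0 ∧ (lam ≠ lam' → v ⬝ᵥ (B₁ *ᵥ u) = 0) := by
  have h2 : A₀ * B₁ = -(A₁ * B₀) := eq_neg_of_add_eq_zero_left hR2
  have h4 : B₀ * A₁ = -(B₁ * A₀) := eq_neg_of_add_eq_zero_left hR4
  have hkey : (B₀ * A₀) * B₁ = B₁ * (A₀ * B₀) := by
    calc (B₀ * A₀) * B₁ = B₀ * (A₀ * B₁) := by noncomm_ring
    _ = B₀ * (-(A₁ * B₀)) := by rw [h2]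
    _ = -(B₀ * A₁) * B₀ := by noncomm_ring
    _ = -(-(B₁ * A₀)) * B₀ := by rw [h4]
    _ = B₁ * (A₀ * B₀) := by noncomm_ring
  have hmain : lam * (v ⬝ᵥ (B₁ *ᵥ u)) = lam' * (v ⬝ᵥ (B₁ *ᵥ u)) := by
    have h1 : (v ᵥ* (B₀ * A₀)) ⬝ᵥ (B₁ *ᵥ u) = lam * (v ⬝ᵥ (B₁ *ᵥ u)) := by
      rw [hv, smul_dotProduct]; rfl
    have h2' : (v ᵥ* (B₀ * A₀)) ⬝ᵥ (B₁ *ᵥ u) = v ⬝ᵥ (B₁ *ᵥ ((A₀ * B₀) *ᵥ u)) := by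
      rw [← dotProduct_mulVec, mulVec_mulVec, mulVec_mulVec, hkey, ← mulVec_mulVec]
    rw [h2', hu, mulVec_smul, dotProduct_smul] at h1
    rw [← h1]; rfl
  constructor
  · rw [sub_mul, hmain, sub_self]
  · intro hne
    have := sub_ne_zero_of_ne hne
    have h0 : (lam - lam') * (v ⬝ᵥ (B₁ *ᵥ u)) = 0 := by rw [sub_mul, hmain, sub_self]
    exact (mul_eq_zero.mp h0).resolve_left this
end

section
/- Let K be a field and let A₀, A₁, B₀, B₁ be n×n matrices over K satisfying (R2) A₀·B₁ + A₁·B₀ = 0 and (R4) B₀·A₁ + B₁·A₀ = 0. If a row vector v satisfies v·(B₁·A₁) = μ·v and a column vector u satisfies (A₁·B₁)·u = μ'·u, then (μ − μ')·(v·(B₀·u)) = 0; in particular, if μ ≠ μ' then v·B₀·u = 0. -/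
open Matrix

/-- Under (R2) `A₀·B₁ + A₁·B₀ = 0` and (R4) `B₀·A₁ + B₁·A₀ = 0`, if `v` is a left
eigenvector of `B₁·A₁` with eigenvalue `μ` and `u` is a right eigenvector of `A₁·B₁`
with eigenvalue `μ'`, then `(μ − μ')·(v·(B₀·u)) = 0`; in particular, if `μ ≠ μ'`
then `v·B₀·u = 0`. -/
theorem stmt_3 {K : Type*} [Field K] {n : Type*} [Fintype n] [DecidableEq n]
    (A₀ A₁ B₀ B₁ : Matrix n n K)
    (hR2 : A₀ * B₁ + A₁ * B₀ = 0)
    (hR4 : B₀ * A₁ + B₁ * A₀ = 0)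
    (v u : n → K) (mu mu' : K)
    (hv : v ᵥ* (B₁ * A₁) = mu • v)
    (hu : (A₁ * B₁) *ᵥ u = mu' • u) :
    (mu - mu') * (v ⬝ᵥ (B₀ *ᵥ u)) = 0 ∧ (mu ≠ mu' → v ⬝ᵥ (B₀ *ᵥ u) = 0) := by
  have h2 : A₁ * B₀ = -(A₀ * B₁) := by rw [eq_neg_iff_add_eq_zero, add_comm]; exact hR2
  have h4 : B₁ * A₀ = -(B₀ * A₁) := by rw [eq_neg_iff_add_eq_zero, add_comm]; exact hR4
  have hcomm : B₁ * A₁ * B₀ = B₀ * (A₁ * B₁) := by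
    calc B₁ * A₁ * B₀ = B₁ * (A₁ * B₀) := by rw [mul_assoc]
    _ = -(B₁ * A₀ * B₁) := by rw [h2]; noncomm_ring
    _ = B₀ * A₁ * B₁ := by rw [h4]; noncomm_ring
    _ = B₀ * (A₁ * B₁) := by rw [mul_assoc]
  have key : (mu - mu') * (v ⬝ᵥ (B₀ *ᵥ u)) = 0 := by
    have e1 : v ⬝ᵥ ((B₁ * A₁ * B₀) *ᵥ u) = mu * (v ⬝ᵥ (B₀ *ᵥ u)) := by
      rw [← mulVec_mulVec, dotProduct_mulVec, hv, smul_dotProduct, smul_eq_mul]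
    have e2 : v ⬝ᵥ ((B₁ * A₁ * B₀) *ᵥ u) = mu' * (v ⬝ᵥ (B₀ *ᵥ u)) := by
      rw [hcomm, ← mulVec_mulVec, hu, mulVec_smul, dotProduct_smul, smul_eq_mul]
    rw [sub_mul, e1.symm.trans e2]
    ring
  exact ⟨key, fun hne => by
    have := mul_eq_zero.mp key
    rcases this with h | h
    · exact absurd (sub_eq_zero.mp h) hne
    · exact h⟩
end

section
/- Let K be a field and let A₀, A₁, B₀, B₁ be n×n matrices over K and d ∈ K satisfying (R3) B₀·A₀ + d·B₁·A₁ = I and (R4) B₀·A₁ + B₁·A₀ = 0. Suppose v is a nonzero row vector, w is a row vector, and m₀, m₀', m₁, m₁' ∈ K satisfy v·B₀ = m₀·w, w·A₀ = m₀'·v, v·B₁ = m₁·w, and w·A₁ = m₁'·v. Then m₀·m₀' + d·m₁·m₁' = 1 and m₀·m₁' + m₁·m₀' = 0 (the multiplier relations λ = m₀(x)m₀(1/x)·-type identities of the paper's eigenvector-sharing lemma). -/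
open Matrix

theorem Matrix.vecMul_mul_eq_smul_of_vecMul_eq_smul {R : Type*} [CommSemiring R]
    {n : Type*} [Fintype n] {A B : Matrix n n R} {v w : n → R} {m m' : R}
    (hB : v ᵥ* B = m • w) (hA : w ᵥ* A = m' • v) : v ᵥ* (B * A) = (m * m') • v := by
  rw [← vecMul_vecMul, hB, smul_vecMul, hA, smul_smul]

/-- The multiplier relations of the paper's eigenvector-sharing lemma: under
(R3) `B₀·A₀ + d·B₁·A₁ = I` and (R4) `B₀·A₁ + B₁·A₀ = 0`, if `v ≠ 0` and
`v·B₀ = m₀·w`, `w·A₀ = m₀'·v`, `v·B₁ = m₁·w`, `w·A₁ = m₁'·v`, then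
`m₀·m₀' + d·m₁·m₁' = 1` and `m₀·m₁' + m₁·m₀' = 0`. -/
theorem stmt_6 {K : Type*} [Field K] {n : Type*} [Fintype n] [DecidableEq n]
    (A₀ A₁ B₀ B₁ : Matrix n n K) (d : K)
    (hR3 : B₀ * A₀ + d • (B₁ * A₁) = 1)
    (hR4 : B₀ * A₁ + B₁ * A₀ = 0)
    (v w : n → K) (m₀ m₀' m₁ m₁' : K)
    (hv0 : v ≠ 0)
    (h1 : v ᵥ* B₀ = m₀ • w)
    (h2 : w ᵥ* A₀ = m₀' • v)
    (h3 : v ᵥ* B₁ = m₁ • w)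
    (h4 : w ᵥ* A₁ = m₁' • v) :
    m₀ * m₀' + d * m₁ * m₁' = 1 ∧ m₀ * m₁' + m₁ * m₀' = 0 := by
  have h00 := vecMul_mul_eq_smul_of_vecMul_eq_smul h1 h2
  have h01 := vecMul_mul_eq_smul_of_vecMul_eq_smul h1 h4
  have h10 := vecMul_mul_eq_smul_of_vecMul_eq_smul h3 h2
  have h11 := vecMul_mul_eq_smul_of_vecMul_eq_smul h3 h4
  have hR3v : (m₀ * m₀' + d * m₁ * m₁') • v = (1 : K) • v := by
    simpa only [vecMul_add, vecMul_smul, h00, h11, vecMul_one, smul_smul, add_smul, mul_assoc,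
      one_smul] using congrArg (v ᵥ* ·) hR3
  have hR4v : (m₀ * m₁' + m₁ * m₀') • v = (0 : K) • v := by
    simpa only [vecMul_add, h01, h10, vecMul_zero, add_smul, zero_smul]
      using congrArg (v ᵥ* ·) hR4
  exact ⟨smul_left_injective K hv0 hR3v, smul_left_injective K hv0 hR4v⟩
end

section
/- Let K be a field, let A₁, B₁ be n×n matrices over K, and let v, v̄, w, w' be row vectors and μ, m, m', n₁, n₁' ∈ K with m ≠ 0. Assume: v·(B₁·A₁) = μ·v; v·B₁ = m·v̄ + n₁·w with w·A₁ = 0; and v̄·A₁ = m'·v + n₁'·w'. If v and w' are linearly independent over K, then μ = m·m' and n₁' = 0 (the vanishing of the spurious null-space component in the paper's eigenvector-sharing lemma). -/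
open Matrix

/-! Expanding `v·B₁·A₁` with the two decompositions gives `μ·v = (m m')·v + (m n₁')·w'`, since the
`w`-component is killed by `A₁`; comparing coefficients in the independent pair `(v, w')` yields
`μ = m m'` and `m n₁' = 0`. -/

theorem vecMul_mul_eq_of_vecMul_eq {K l o : Type*} [CommSemiring K] [Fintype l] [Fintype o]
    {B : Matrix l o K} {A : Matrix o l K} {v w' : l → K} {vbar w : o → K} {m m' n₁ n₁' : K}
    (hvB : v ᵥ* B = m • vbar + n₁ • w) (hw : w ᵥ* A = 0)
    (hvbar : vbar ᵥ* A = m' • v + n₁' • w') :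
    v ᵥ* (B * A) = (m * m') • v + (m * n₁') • w' := by
  rw [← vecMul_vecMul, hvB, add_vecMul, smul_vecMul, smul_vecMul, hw, hvbar, smul_add,
    smul_smul, smul_smul, smul_zero, add_zero]

theorem stmt_7_general {K : Type*} [Field K] {n : Type*} [Fintype n]
    (A₁ B₁ : Matrix n n K)
    (v vbar w w' : n → K) (mu m m' n₁ n₁' : K)
    (hm : m ≠ 0)
    (hv : v ᵥ* (B₁ * A₁) = mu • v)
    (hvB1 : v ᵥ* B₁ = m • vbar + n₁ • w)
    (hw : w ᵥ* A₁ = 0)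
    (hvbar : vbar ᵥ* A₁ = m' • v + n₁' • w')
    (hind : LinearIndependent K ![v, w']) :
    mu = m * m' ∧ n₁' = 0 := by
  have hexpand := vecMul_mul_eq_of_vecMul_eq hvB1 hw hvbar
  obtain ⟨hmu, hn₁'⟩ := hind.eq_of_pair (s := mu) (t := 0) (s' := m * m') (t' := m * n₁')
    (by rw [zero_smul, add_zero, ← hv, hexpand])
  exact ⟨hmu, (mul_eq_zero.mp hn₁'.symm).resolve_left hm⟩

/-- Vanishing of the spurious null-space component in the paper's eigenvector-sharing
lemma: if `v·(B₁·A₁) = μ·v`, `v·B₁ = m·v̄ + n₁·w` with `w·A₁ = 0`, and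
`v̄·A₁ = m'·v + n₁'·w'` with `m ≠ 0`, and `v, w'` are linearly independent,
then `μ = m·m'` and `n₁' = 0`. -/
theorem stmt_7 {K : Type*} [Field K] {n : Type*} [Fintype n] [DecidableEq n]
    (A₁ B₁ : Matrix n n K)
    (v vbar w w' : n → K) (mu m m' n₁ n₁' : K)
    (hm : m ≠ 0)
    (hv : v ᵥ* (B₁ * A₁) = mu • v)
    (hvB1 : v ᵥ* B₁ = m • vbar + n₁ • w)
    (hw : w ᵥ* A₁ = 0)
    (hvbar : vbar ᵥ* A₁ = m' • v + n₁' • w')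
    (hind : LinearIndependent K ![v, w']) :
    mu = m * m' ∧ n₁' = 0 :=
  stmt_7_general A₁ B₁ v vbar w w' mu m m' n₁ n₁' hm hv hvB1 hw hvbar hind
end

section
/- Let K be a field and let A₀, A₁, B₀, B₁ be n×n matrices over K and d ∈ K satisfying (R1) A₀·B₀ + d·A₁·B₁ = I and (R2) A₀·B₁ + A₁·B₀ = 0. If a row vector v and a scalar k ∈ K satisfy v·A₀ = k·(v·A₁) (i.e. v·(A₀ − k·A₁) = 0), then (d − k²)·(v·(A₁·B₁)) = v; in particular, if v ≠ 0 then d ≠ k² and v is a left eigenvector of A₁·B₁ with eigenvalue 1/(d − k²). -/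
open Matrix

/-
Multiply (R1) and (R2) on the left by `v`. Since `v·A₀ = k·(v·A₁)`, (R2) gives
`k·(v·A₁·B₀) = -k²·(v·A₁·B₁)`, so `v·A₀·B₀ = -k²·(v·A₁·B₁)`, and (R1) becomes
`(d - k²)·(v·A₁·B₁) = v`.
-/

section

variable {R : Type*} [CommRing R] {m l : Type*} [Fintype m] [Fintype l]
  {A₀ A₁ : Matrix m l R} {B₀ B₁ : Matrix l m R} {v : m → R} {k : R}

theorem vecMul_mul_eq_smul_vecMul_mul (hv : v ᵥ* A₀ = k • (v ᵥ* A₁)) (B : Matrix l m R) :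
    v ᵥ* (A₀ * B) = k • (v ᵥ* (A₁ * B)) := by
  rw [← vecMul_vecMul, hv, smul_vecMul, vecMul_vecMul]

theorem vecMul_mul_eq_neg_sq_smul_of_add_eq_zero (hR2 : A₀ * B₁ + A₁ * B₀ = 0)
    (hv : v ᵥ* A₀ = k • (v ᵥ* A₁)) :
    v ᵥ* (A₀ * B₀) = -(k ^ 2 • (v ᵥ* (A₁ * B₁))) := by
  have hR2v : k • (v ᵥ* (A₁ * B₁)) + v ᵥ* (A₁ * B₀) = 0 := by
    rw [← vecMul_mul_eq_smul_vecMul_mul hv, ← vecMul_add, hR2, vecMul_zero]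
  rw [vecMul_mul_eq_smul_vecMul_mul hv, eq_neg_of_add_eq_zero_right hR2v, smul_neg,
    smul_smul, sq]

theorem sub_sq_smul_vecMul_mul_eq [DecidableEq m] {d : R}
    (hR1 : A₀ * B₀ + d • (A₁ * B₁) = 1) (hR2 : A₀ * B₁ + A₁ * B₀ = 0)
    (hv : v ᵥ* A₀ = k • (v ᵥ* A₁)) :
    (d - k ^ 2) • (v ᵥ* (A₁ * B₁)) = v := by
  have hR1v : v ᵥ* (A₀ * B₀) + d • (v ᵥ* (A₁ * B₁)) = v := by
    rw [← vecMul_smul, ← vecMul_add, hR1, vecMul_one]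
  rw [vecMul_mul_eq_neg_sq_smul_of_add_eq_zero hR2 hv] at hR1v
  linear_combination (norm := module) hR1v

end

theorem ne_zero_and_eq_inv_smul_of_smul_eq {K V : Type*} [Field K] [AddCommGroup V]
    [Module K V] {c : K} {w v : V} (h : c • w = v) (hv : v ≠ 0) :
    c ≠ 0 ∧ w = c⁻¹ • v := by
  have hc : c ≠ 0 := by
    rintro rfl
    exact hv (by rw [← h, zero_smul])
  exact ⟨hc, by rw [← h, inv_smul_smul₀ hc]⟩

/-- Under (R1) `A₀·B₀ + d·A₁·B₁ = I` and (R2) `A₀·B₁ + A₁·B₀ = 0`, if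
`v·A₀ = k·(v·A₁)`, then `(d − k²)·(v·(A₁·B₁)) = v`; in particular, if `v ≠ 0`
then `d ≠ k²` and `v` is a left eigenvector of `A₁·B₁` with eigenvalue `1/(d − k²)`. -/
theorem stmt_10 {K : Type*} [Field K] {n : Type*} [Fintype n] [DecidableEq n]
    (A₀ A₁ B₀ B₁ : Matrix n n K) (d : K)
    (hR1 : A₀ * B₀ + d • (A₁ * B₁) = 1)
    (hR2 : A₀ * B₁ + A₁ * B₀ = 0)
    (v : n → K) (k : K)
    (hv : v ᵥ* A₀ = k • (v ᵥ* A₁)) :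
    (d - k ^ 2) • (v ᵥ* (A₁ * B₁)) = v ∧
      (v ≠ 0 → d ≠ k ^ 2 ∧ v ᵥ* (A₁ * B₁) = (1 / (d - k ^ 2)) • v) := by
  have key := sub_sq_smul_vecMul_mul_eq hR1 hR2 hv
  refine ⟨key, fun hv0 => ?_⟩
  obtain ⟨hd, heig⟩ := ne_zero_and_eq_inv_smul_of_smul_eq key hv0
  exact ⟨sub_ne_zero.mp hd, by rwa [one_div]⟩
end

section
/- Let K be a field, let A₀, B₀ be n×n matrices over K, and let λ, m, m̄ ∈ K with λ = m·m̄, m ≠ 0 and m̄ ≠ 0. Suppose row vectors v₃ and v̄₃ satisfy v₃·(B₀·A₀) = λ·v₃ and v̄₃·(A₀·B₀) = λ·v̄₃. Define v := v₃ + m⁻¹·(v̄₃·A₀) and v̄ := v̄₃ + m̄⁻¹·(v₃·B₀). Then v·B₀ = m̄·v̄ and v̄·A₀ = m·v (the paper's construction of a vector v(x) in a two-dimensional eigenspace satisfying v(x)·P₀(1/x) = m₀(x)·v(1/x)). -/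
open Matrix

theorem vecMul_add_inv_smul_vecMul_eq_smul {K : Type*} [Field K] {n : Type*} [Fintype n]
    (A B : Matrix n n K) {m mbar : K} (hm : m ≠ 0) (hmbar : mbar ≠ 0) {v : n → K}
    (hv : v ᵥ* (A * B) = (m * mbar) • v) (w : n → K) :
    (w + m⁻¹ • (v ᵥ* A)) ᵥ* B = mbar • (v + mbar⁻¹ • (w ᵥ* B)) := by
  rw [add_vecMul, smul_vecMul, vecMul_vecMul, hv, smul_smul, inv_mul_cancel_left₀ hm,
    smul_add, smul_smul, mul_inv_cancel₀ hmbar, one_smul, add_comm]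

theorem stmt_11_general {K : Type*} [Field K] {n : Type*} [Fintype n]
    (A₀ B₀ : Matrix n n K) (lam m mbar : K)
    (hlam : lam = m * mbar) (hm : m ≠ 0) (hmbar : mbar ≠ 0)
    (v₃ vbar₃ : n → K)
    (hv₃ : v₃ ᵥ* (B₀ * A₀) = lam • v₃)
    (hvbar₃ : vbar₃ ᵥ* (A₀ * B₀) = lam • vbar₃) :
    (v₃ + m⁻¹ • (vbar₃ ᵥ* A₀)) ᵥ* B₀ = mbar • (vbar₃ + mbar⁻¹ • (v₃ ᵥ* B₀)) ∧
      (vbar₃ + mbar⁻¹ • (v₃ ᵥ* B₀)) ᵥ* A₀ = m • (v₃ + m⁻¹ • (vbar₃ ᵥ* A₀)) := by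
  subst hlam
  rw [mul_comm] at hv₃
  exact ⟨vecMul_add_inv_smul_vecMul_eq_smul A₀ B₀ hm hmbar hvbar₃ v₃,
    vecMul_add_inv_smul_vecMul_eq_smul B₀ A₀ hmbar hm hv₃ vbar₃⟩

/-- The paper's construction of a vector `v(x)` in a two-dimensional eigenspace
satisfying `v(x)·P₀(1/x) = m₀(x)·v(1/x)`: if `v₃·(B₀·A₀) = λ·v₃`,
`v̄₃·(A₀·B₀) = λ·v̄₃` with `λ = m·m̄`, `m ≠ 0`, `m̄ ≠ 0`, then
`v := v₃ + m⁻¹·(v̄₃·A₀)` and `v̄ := v̄₃ + m̄⁻¹·(v₃·B₀)` satisfy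
`v·B₀ = m̄·v̄` and `v̄·A₀ = m·v`. -/
theorem stmt_11 {K : Type*} [Field K] {n : Type*} [Fintype n] [DecidableEq n]
    (A₀ B₀ : Matrix n n K) (lam m mbar : K)
    (hlam : lam = m * mbar) (hm : m ≠ 0) (hmbar : mbar ≠ 0)
    (v₃ vbar₃ : n → K)
    (hv₃ : v₃ ᵥ* (B₀ * A₀) = lam • v₃)
    (hvbar₃ : vbar₃ ᵥ* (A₀ * B₀) = lam • vbar₃) :
    (v₃ + m⁻¹ • (vbar₃ ᵥ* A₀)) ᵥ* B₀ = mbar • (vbar₃ + mbar⁻¹ • (v₃ ᵥ* B₀)) ∧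
      (vbar₃ + mbar⁻¹ • (v₃ ᵥ* B₀)) ᵥ* A₀ = m • (v₃ + m⁻¹ • (vbar₃ ᵥ* A₀)) :=
  stmt_11_general A₀ B₀ lam m mbar hlam hm hmbar v₃ vbar₃ hv₃ hvbar₃
end

section
/- Let K be a field and σ : K → K a ring automorphism with σ∘σ = id and σ ≠ id; for a matrix or vector over K write σ(·) for entrywise application of σ. Let P₀, P₁ be 3×3 matrices over K and Δ ∈ K with σ(Δ) = Δ, satisfying P₀·σ(P₀) + Δ·(P₁·σ(P₁)) = I and P₀·σ(P₁) + P₁·σ(P₀) = 0. Assume det P₀ ≠ 0 and that the left null space {w : w·P₁ = 0} of P₁ is one-dimensional. Then there exists a nonzero row vector v over K such that σ(v)·P₁ = 0 and σ(v)·P₀ = v (the paper's lemma producing v_L with v_L(1/x)·P₀(x) = v_L(x)). -/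
open Matrix

/-- The paper's lemma producing the null vector `v_L` with `v_L(1/x)·P₁(x) = 0` and
`v_L(1/x)·P₀(x) = v_L(x)`: with the substitution `x ↦ 1/x` modelled by an involutive
field automorphism `σ ≠ id`, `Δ` fixed by `σ`, the well-definedness conditions
`P₀·σ(P₀) + Δ·P₁·σ(P₁) = I` and `P₀·σ(P₁) + P₁·σ(P₀) = 0`, `det P₀ ≠ 0`, and the
left null space of `P₁` one-dimensional, there exists a nonzero row vector `v` with
`σ(v)·P₁ = 0` and `σ(v)·P₀ = v`. -/
theorem stmt_12 {K : Type*} [Field K] (σ : K ≃+* K)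
    (hσ2 : ∀ a, σ (σ a) = a) (hσne : σ ≠ RingEquiv.refl K)
    (P₀ P₁ : Matrix (Fin 3) (Fin 3) K) (Δ : K) (hΔ : σ Δ = Δ)
    (h1 : P₀ * P₀.map ⇑σ + Δ • (P₁ * P₁.map ⇑σ) = 1)
    (h2 : P₀ * P₁.map ⇑σ + P₁ * P₀.map ⇑σ = 0)
    (hdet : P₀.det ≠ 0)
    (hrank : Module.finrank K ↥(LinearMap.ker P₁.vecMulLinear) = 1) :
    ∃ v : Fin 3 → K, v ≠ 0 ∧ (⇑σ ∘ v) ᵥ* P₁ = 0 ∧ (⇑σ ∘ v) ᵥ* P₀ = v := by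
  -- conjugation identity
  have key : ∀ (z : Fin 3 → K) (M : Matrix (Fin 3) (Fin 3) K),
      (⇑σ ∘ z) ᵥ* M = ⇑σ ∘ (z ᵥ* M.map ⇑σ) := by
    intro z M
    funext j
    simp only [Matrix.vecMul, dotProduct, Function.comp_apply, Matrix.map_apply,
      map_sum, _root_.map_mul, hσ2]
  -- get a nonzero element of the kernel
  have hnt : Nontrivial ↥(LinearMap.ker P₁.vecMulLinear) := by
    rw [← rank_pos_iff_nontrivial (R := K), ← Module.finrank_eq_rank, hrank]
    norm_num
  obtain ⟨w₀, hw₀⟩ := exists_ne (0 : ↥(LinearMap.ker P₁.vecMulLinear))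
  set w : Fin 3 → K := (w₀ : Fin 3 → K) with hwdef
  have hwP₁ : w ᵥ* P₁ = 0 := by
    have := w₀.2
    rw [LinearMap.mem_ker, Matrix.vecMulLinear_apply] at this
    exact this
  have hwne : w ≠ 0 := fun h => hw₀ (Subtype.ext h)
  -- ψ(w) = σ ∘ (w ᵥ* P₀) lies in the kernel
  have hP2 : P₀ * P₁.map ⇑σ = -(P₁ * P₀.map ⇑σ) := eq_neg_of_add_eq_zero_left h2
  have hψker : (⇑σ ∘ (w ᵥ* P₀)) ᵥ* P₁ = 0 := by
    rw [key]
    have h0 : (w ᵥ* P₀) ᵥ* P₁.map ⇑σ = 0 := by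
      rw [Matrix.vecMul_vecMul, hP2]
      have : w ᵥ* (P₁ * P₀.map ⇑σ) = 0 := by
        rw [← Matrix.vecMul_vecMul, hwP₁, Matrix.zero_vecMul]
      simp [Matrix.vecMul_neg, this]
    rw [h0]
    funext j
    simp
  -- get the scalar c with c • w = σ ∘ (w ᵥ* P₀)
  obtain ⟨c, hc⟩ := (finrank_eq_one_iff_of_nonzero' w₀ hw₀).mp hrank
    ⟨⇑σ ∘ (w ᵥ* P₀), by simpa [LinearMap.mem_ker, Matrix.vecMulLinear_apply] using hψker⟩
  have hcw : c • w = ⇑σ ∘ (w ᵥ* P₀) := congrArg Subtype.val hc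
  -- hence w ᵥ* P₀ = σ c • (σ ∘ w)
  have hwP0 : w ᵥ* P₀ = σ c • (⇑σ ∘ w) := by
    funext i
    have h := congrFun hcw i
    simp only [Pi.smul_apply, Function.comp_apply, smul_eq_mul] at h ⊢
    have := congrArg σ h
    rw [_root_.map_mul, hσ2] at this
    exact this.symm
  -- ψ ∘ ψ = id on w : (w ᵥ* P₀) ᵥ* P₀.map σ = w
  have hP1 : P₀ * P₀.map ⇑σ = 1 - Δ • (P₁ * P₁.map ⇑σ) := eq_sub_of_add_eq h1
  have hsm : w ᵥ* (Δ • (P₁ * P₁.map ⇑σ)) = Δ • (w ᵥ* (P₁ * P₁.map ⇑σ)) := by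
    funext j
    simp [Matrix.vecMul, dotProduct, Finset.mul_sum, mul_left_comm]
  have hψψ : (w ᵥ* P₀) ᵥ* P₀.map ⇑σ = w := by
    rw [Matrix.vecMul_vecMul, hP1, Matrix.vecMul_sub, Matrix.vecMul_one, hsm,
      ← Matrix.vecMul_vecMul, hwP₁, Matrix.zero_vecMul, smul_zero, sub_zero]
  -- derive σ c * c = 1
  have hmapmap : (P₀.map ⇑σ).map ⇑σ = P₀ := by
    ext i j; simp [Matrix.map_apply, hσ2]
  have hσwP : (⇑σ ∘ w) ᵥ* P₀.map ⇑σ = c • w := by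
    rw [key, hmapmap, ← hcw]
  have hw_eq : (σ c * c) • w = w := by
    calc (σ c * c) • w = σ c • (c • w) := (smul_smul _ _ _).symm
      _ = σ c • ((⇑σ ∘ w) ᵥ* P₀.map ⇑σ) := by rw [hσwP]
      _ = (σ c • (⇑σ ∘ w)) ᵥ* P₀.map ⇑σ := by rw [Matrix.smul_vecMul]
      _ = (w ᵥ* P₀) ᵥ* P₀.map ⇑σ := by rw [← hwP0]
      _ = w := hψψ
  have hcc : σ c * c = 1 := by
    by_contra h
    have : (σ c * c - 1) • w = 0 := by
      rw [sub_smul, one_smul, hw_eq, sub_self]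
    rcases smul_eq_zero.mp this with h' | h'
    · exact h (sub_eq_zero.mp h')
    · exact hwne h'
  -- Hilbert 90 for the involution: find d ≠ 0 with c * σ d = d
  have hex : ∃ d : K, d ≠ 0 ∧ c * σ d = d := by
    by_cases hc1 : 1 + c = 0
    · have hcneg : c = -1 := eq_neg_of_add_eq_zero_right hc1
      have : ∃ a, σ a ≠ a := by
        by_contra h
        push_neg at h
        exact hσne (RingEquiv.ext h)
      obtain ⟨a, ha⟩ := this
      refine ⟨a - σ a, sub_ne_zero.mpr (Ne.symm ha), ?_⟩
      rw [map_sub, hσ2, hcneg]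
      ring
    · refine ⟨1 + c, hc1, ?_⟩
      rw [_root_.map_add, _root_.map_one]
      linear_combination hcc
  obtain ⟨d, hd0, hd⟩ := hex
  have hσd : σ c * d = σ d := by
    have := congrArg σ hd
    rwa [_root_.map_mul, hσ2] at this
  -- the desired vector
  refine ⟨⇑σ ∘ (d • w), ?_, ?_, ?_⟩
  · intro h
    have hu : d • w ≠ 0 := smul_ne_zero hd0 hwne
    apply hu
    funext i
    have := congrFun h i
    simp only [Function.comp_apply, Pi.zero_apply] at this
    have := congrArg σ this
    rw [hσ2, map_zero] at this
    exact this
  · have hσσ : ⇑σ ∘ (⇑σ ∘ (d • w)) = d • w := by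
      funext i; simp [hσ2]
    rw [hσσ, Matrix.smul_vecMul, hwP₁, smul_zero]
  · have hσσ : ⇑σ ∘ (⇑σ ∘ (d • w)) = d • w := by
      funext i; simp [hσ2]
    rw [hσσ, Matrix.smul_vecMul, hwP0]
    funext i
    simp only [Pi.smul_apply, Function.comp_apply, smul_eq_mul, _root_.map_mul]
    rw [← hσd]
    ring
end

section
/- Let F = ℂ(x,t) be the field of rational functions in two variables x, t over ℂ, let D = 4t²x² + 4t² − x ∈ F, and let P₁ be the 3×3 matrix over F with rows (x³/(2D), −t·x²·(x²+1)/D, x/(2D)), (t·x³/D, −x³/(2D), t·x/D), and (0, −1/(2t), 0). Then the row vector v = (−2·x⁻², x⁻²·t⁻¹, 1) satisfies v·P₁ = 0; consequently det P₁ = 0, i.e. P₁ does not have full rank. -/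
open Matrix MvPolynomial

noncomputable section

/-- The field `ℂ(x,t)` of rational functions in two variables over `ℂ`. -/
abbrev RatField : Type := FractionRing (MvPolynomial (Fin 2) ℂ)

/-- The variable `x` in `ℂ(x,t)`. -/
noncomputable def xv : RatField := algebraMap (MvPolynomial (Fin 2) ℂ) RatField (X 0)

/-- The variable `t` in `ℂ(x,t)`. -/
noncomputable def tv : RatField := algebraMap (MvPolynomial (Fin 2) ℂ) RatField (X 1)

/-- `D = 4t²x² + 4t² − x`. -/
noncomputable def Dv : RatField := 4 * tv ^ 2 * xv ^ 2 + 4 * tv ^ 2 - xv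

/-- The square-root part `P₁` of the `3×3` matrix cRBVP for the three-quadrant walk
with steps `{(1,1), (−1,1), (0,−1)}`. -/
noncomputable def P1mat : Matrix (Fin 3) (Fin 3) RatField :=
  !![xv ^ 3 / (2 * Dv), -(tv * xv ^ 2 * (xv ^ 2 + 1)) / Dv, xv / (2 * Dv);
     tv * xv ^ 3 / Dv, -(xv ^ 3) / (2 * Dv), tv * xv / Dv;
     0, -(1 / (2 * tv)), 0]

section LeftNullVector

variable {K : Type*} [Field K] (x t : K)

def p1Denom : K := 4 * t ^ 2 * x ^ 2 + 4 * t ^ 2 - x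

def p1Matrix : Matrix (Fin 3) (Fin 3) K :=
  !![x ^ 3 / (2 * p1Denom x t), -(t * x ^ 2 * (x ^ 2 + 1)) / p1Denom x t, x / (2 * p1Denom x t);
     t * x ^ 3 / p1Denom x t, -(x ^ 3) / (2 * p1Denom x t), t * x / p1Denom x t;
     0, -(1 / (2 * t)), 0]

def p1NullVec : Fin 3 → K := ![-2 * (x ^ 2)⁻¹, (x ^ 2)⁻¹ * t⁻¹, 1]

theorem p1NullVec_ne_zero : p1NullVec x t ≠ 0 :=
  fun h => one_ne_zero (congrFun h 2)

variable {x t}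

/-- The middle column is where `D` enters: after clearing denominators it reads
`4t²(x² + 1) − x − D = 0`. -/
theorem p1NullVec_vecMul_p1Matrix (hx : x ≠ 0) (ht : t ≠ 0) (h2 : (2 : K) ≠ 0)
    (hD : p1Denom x t ≠ 0) : p1NullVec x t ᵥ* p1Matrix x t = 0 := by
  ext j
  fin_cases j <;>
    simp only [p1NullVec, p1Matrix, vecMul, dotProduct, Fin.sum_univ_three, of_apply, cons_val',
      cons_val, cons_val_zero, cons_val_one, cons_val_fin_one, Fin.zero_eta, Fin.mk_one,
      Fin.reduceFinMk, Fin.isValue, Pi.zero_apply] <;>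
    field_simp <;>
    unfold p1Denom <;>
    ring

end LeftNullVector

theorem P1mat_eq_p1Matrix : P1mat = p1Matrix xv tv := rfl

theorem xv_ne_zero : xv ≠ 0 :=
  (map_ne_zero_iff _ (IsFractionRing.injective _ _)).mpr (X_ne_zero 0)

theorem tv_ne_zero : tv ≠ 0 :=
  (map_ne_zero_iff _ (IsFractionRing.injective _ _)).mpr (X_ne_zero 1)

/-- `D` is nonzero since it specialises to `−1` at `x = 1`, `t = 0`. -/
theorem Dv_ne_zero : Dv ≠ 0 := by
  have hD : Dv = algebraMap (MvPolynomial (Fin 2) ℂ) RatField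
      (4 * X 1 ^ 2 * X 0 ^ 2 + 4 * X 1 ^ 2 - X 0) := by
    simp [Dv, xv, tv, map_ofNat]
  rw [hD, map_ne_zero_iff _ (IsFractionRing.injective _ _)]
  intro h
  simpa using congrArg (eval ![1, 0]) h

/-- The row vector `v = (−2x⁻², x⁻²t⁻¹, 1)` is a left null vector of `P₁`;
consequently `det P₁ = 0`, i.e. `P₁` does not have full rank. -/
theorem stmt_15 :
    (![-2 * (xv ^ 2)⁻¹, (xv ^ 2)⁻¹ * tv⁻¹, 1] ᵥ* P1mat = 0) ∧ P1mat.det = 0 := by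
  have hv : p1NullVec xv tv ᵥ* p1Matrix xv tv = 0 :=
    p1NullVec_vecMul_p1Matrix xv_ne_zero tv_ne_zero two_ne_zero Dv_ne_zero
  rw [P1mat_eq_p1Matrix]
  exact ⟨hv, exists_vecMul_eq_zero_iff.mp ⟨_, p1NullVec_ne_zero xv tv, hv⟩⟩

end
end

section
/- With the three-quadrant walk model notation, the following identity holds in ℂ[x,x⁻¹][[t]]: −t·x·Hn(x⁻¹) + t·x⁻¹·Hn(x) + x·Hp₋₁(x) − x⁻¹·Hp₋₁(x⁻¹) + 2t·x⁻¹·Hp(x⁻¹) − 2t·x·Hp(x) + (x − x⁻¹)·Y₀ = 0, where for G ∈ ℂ[x,x⁻¹][[t]] the series G(x⁻¹) is obtained by applying the ℂ-algebra involution x ↦ x⁻¹ of Laurent polynomials to each coefficient of G (the paper's separable linear equation obtained from the null vector of the matrix cRBVP). -/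
open LaurentPolynomial

/-- Number of `n`-step walks from `(0,0)` to `(i,j)` with steps in
`{(1,1), (−1,1), (0,−1)}`, confined to the three-quadrant cone
`C = {(i,j) : 0 ≤ i ∨ 0 ≤ j}` (the paper's model with corner-step weight `p = 1`). -/
def walkCount : ℕ → ℤ → ℤ → ℕ
  | 0, i, j => if i = 0 ∧ j = 0 then 1 else 0
  | n + 1, i, j =>
      if 0 ≤ i ∨ 0 ≤ j then
        walkCount n (i - 1) (j - 1) + walkCount n (i + 1) (j - 1) + walkCount n i (j + 1)
      else 0

/-- `Hp(x) = Σ_{i≥0,n≥0} f(i,0,n)·xⁱ·tⁿ ∈ ℂ[x,x⁻¹][[t]]` (walks ending on the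
nonnegative horizontal axis); since `f(i,0,n) = 0` for `i > n`, the inner sum is
finite. -/
noncomputable def Hp : PowerSeries (LaurentPolynomial ℂ) :=
  PowerSeries.mk fun n =>
    ∑ i ∈ Finset.range (n + 1), LaurentPolynomial.C (walkCount n i 0 : ℂ) * T (i : ℤ)

/-- `Hn(x) = Σ_{i≥1,n≥0} f(−i,0,n)·xⁱ·tⁿ` (walks ending on the negative horizontal
axis). -/
noncomputable def Hn : PowerSeries (LaurentPolynomial ℂ) :=
  PowerSeries.mk fun n =>
    ∑ i ∈ Finset.Icc 1 n, LaurentPolynomial.C (walkCount n (-(i : ℤ)) 0 : ℂ) * T (i : ℤ)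

/-- `Hp₋₁(x) = Σ_{i≥0,n≥0} f(i,−1,n)·xⁱ·tⁿ` (walks ending on the line `j = −1`,
`i ≥ 0`). -/
noncomputable def Hpm1 : PowerSeries (LaurentPolynomial ℂ) :=
  PowerSeries.mk fun n =>
    ∑ i ∈ Finset.range (n + 1), LaurentPolynomial.C (walkCount n i (-1) : ℂ) * T (i : ℤ)

/-- The `ℂ`-algebra involution `x ↦ x⁻¹` of `ℂ[x,x⁻¹]`, applied to each coefficient
of a power series in `t`: `G(x) ↦ G(x⁻¹)`. -/
noncomputable def inv_x :
    PowerSeries (LaurentPolynomial ℂ) →+* PowerSeries (LaurentPolynomial ℂ) :=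
  PowerSeries.map (RingHomClass.toRingHom (LaurentPolynomial.invert (R := ℂ)))

/-!
Write `H_j` for the generating function of the walks ending on row `j`. The step set gives
`H_j = t(x + x⁻¹)H_{j-1} + tH_{j+1}` for `j ≥ 1`; on the rows `j ≤ -1`, where only `i ≥ 0` occurs,
the same holds up to a boundary term `t·f(0, j-1, n)·x⁻¹`, which cancels in the antisymmetrisation
`x·H_j(x) - x⁻¹·H_j(x⁻¹)`. A recurrence `u_{m+1} = t(a·u_m + b·u_{m+2})` has the unique solution
`Z^m·u_0` with `Z = t(a + bZ²)`, so `H_1 = (x + x⁻¹)Y₀·H_0`, and the antisymmetrised row `-1` is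
`Y₀` times the antisymmetrised row `0`. Combining the equation of row `0`, its image under
`x ↦ x⁻¹` (which fixes `Y₀`) and the kernel equation yields the identity multiplied by the unit
`1 - t(x + x⁻¹)Y₀`.
-/

namespace PowerSeries

variable {R : Type*} [CommRing R]

theorem isUnit_one_sub_X_mul (f : R⟦X⟧) : IsUnit (1 - X * f) :=
  isUnit_iff_constantCoeff.mpr (by simp)

theorem eq_of_eq_X_mul_add_mul_sq {a b Y Z : R⟦X⟧} (hY : Y = X * (a + b * Y ^ 2))
    (hZ : Z = X * (a + b * Z ^ 2)) : Y = Z := by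
  have h : (1 - X * (b * (Y + Z))) * (Y - Z) = 0 := by linear_combination hY - hZ
  exact sub_eq_zero.mp ((isUnit_one_sub_X_mul _).mul_right_eq_zero.mp h)

theorem eq_pow_mul_of_recurrence {a b Z : R⟦X⟧} {u : ℕ → R⟦X⟧} (hZ : Z = X * (a + b * Z ^ 2))
    (hu : ∀ m, u (m + 1) = X * (a * u m + b * u (m + 2))) (m : ℕ) : u m = Z ^ m * u 0 := by
  set v : ℕ → R⟦X⟧ := fun m => u m - Z ^ m * u 0 with hv_def
  have hv : ∀ m, v (m + 1) = X * (a * v m + b * v (m + 2)) := fun m => by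
    simp only [hv_def]; linear_combination hu m - Z ^ m * u 0 * hZ
  have hcoeff : ∀ N m, coeff N (v m) = 0 := by
    intro N
    induction N using Nat.strong_induction_on with
    | _ N ih =>
      rintro (_ | m)
      · simp [hv_def]
      rw [hv]
      rcases N with _ | N
      · exact coeff_zero_X_mul _
      rw [coeff_succ_X_mul, map_add, coeff_mul, coeff_mul, Finset.sum_eq_zero, Finset.sum_eq_zero,
        add_zero] <;>
      · intro p hp
        rw [ih p.2 (by have := Finset.HasAntidiagonal.mem_antidiagonal.mp hp; omega), mul_zero]
  exact sub_eq_zero.mp (ext fun N => (hcoeff N m).trans (map_zero _).symm)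

theorem mk_eq_C_add_X_mul {p q r : ℕ → R} (a : R) (h : ∀ n, p (n + 1) = a * q n + r n) :
    mk p = C (p 0) + X * (C a * mk q + mk r) := by
  ext (_ | n) <;> simp [coeff_succ_X_mul, h]

end PowerSeries

namespace LaurentPolynomial

variable {R : Type*} [Semiring R]

theorem coeff_T_one_mul (p : R[T;T⁻¹]) (k : ℤ) : (T 1 * p).coeff k = p.coeff (k - 1) := by
  rw [T, AddMonoidAlgebra.coeff_single_mul_apply, one_mul, neg_add_eq_sub]

theorem coeff_T_neg_one_mul (p : R[T;T⁻¹]) (k : ℤ) : (T (-1) * p).coeff k = p.coeff (k + 1) := by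
  rw [T, AddMonoidAlgebra.coeff_single_mul_apply, one_mul, neg_neg, add_comm]

theorem coeff_C_mul_T (r : R) (m k : ℤ) : (C r * T m).coeff k = if m = k then r else 0 := by
  simp [← single_eq_C_mul_T, Finsupp.single_apply]

theorem coeff_sum_C_mul_T (s : Finset ℤ) (g : ℤ → R) (k : ℤ) :
    (∑ i ∈ s, C (g i) * T i).coeff k = if k ∈ s then g k else 0 := by
  simp [← single_eq_C_mul_T, Finsupp.single_apply]

theorem coeff_sum_C_mul_T_natCast (s : Finset ℕ) (g : ℕ → R) (k : ℤ) :
    (∑ i ∈ s, C (g i) * T (i : ℤ)).coeff k = if 0 ≤ k ∧ k.toNat ∈ s then g k.toNat else 0 := by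
  simp only [← single_eq_C_mul_T, AddMonoidAlgebra.coeff_sum, AddMonoidAlgebra.coeff_single,
    Finsupp.coe_finsetSum, Finset.sum_apply, Finsupp.single_apply]
  split_ifs with h
  · obtain ⟨hk, hs⟩ := h
    lift k to ℕ using hk
    simp only [Int.toNat_natCast] at hs
    simp [hs]
  · refine Finset.sum_eq_zero fun i hi => if_neg ?_
    rintro rfl
    exact h ⟨by omega, by simpa using hi⟩

end LaurentPolynomial

theorem inv_x_X : inv_x PowerSeries.X = PowerSeries.X := PowerSeries.map_X _

theorem inv_x_C (a : LaurentPolynomial ℂ) : inv_x (PowerSeries.C a) = PowerSeries.C (invert a) :=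
  PowerSeries.map_C _ _

theorem inv_x_C_T_add_T_neg :
    inv_x (PowerSeries.C (T 1 + T (-1))) = PowerSeries.C (T 1 + T (-1)) := by
  rw [inv_x_C, map_add, invert_T, invert_T, neg_neg, add_comm]

theorem inv_x_inv_x (f : PowerSeries (LaurentPolynomial ℂ)) : inv_x (inv_x f) = f := by
  ext n : 1
  exact involutive_invert (PowerSeries.coeff n f)

theorem coeff_inv_x (f : PowerSeries (LaurentPolynomial ℂ)) (n : ℕ) :
    PowerSeries.coeff n (inv_x f) = invert (PowerSeries.coeff n f) :=
  PowerSeries.coeff_map _ _ _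

theorem walkCount_succ {n : ℕ} {i j : ℤ} (h : 0 ≤ i ∨ 0 ≤ j) :
    walkCount (n + 1) i j
      = walkCount n (i - 1) (j - 1) + walkCount n (i + 1) (j - 1) + walkCount n i (j + 1) := by
  simp [walkCount, h]

theorem walkCount_zero_of_ne_origin {i j : ℤ} (h : ¬(i = 0 ∧ j = 0)) : walkCount 0 i j = 0 := by
  simp [walkCount, h]

theorem walkCount_eq_zero_of_neg_of_neg (n : ℕ) {i j : ℤ} (hi : i < 0) (hj : j < 0) :
    walkCount n i j = 0 := by
  cases n <;> simp [walkCount] <;> omega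

theorem walkCount_eq_zero_of_notMem_Icc {n : ℕ} {i : ℤ} (j : ℤ) (hi : i ∉ Finset.Icc (-(n : ℤ)) n) :
    walkCount n i j = 0 := by
  rw [Finset.mem_Icc] at hi
  induction n generalizing i j with
  | zero => exact walkCount_zero_of_ne_origin (by omega)
  | succ n ih =>
    by_cases h : 0 ≤ i ∨ 0 ≤ j
    · push_cast at hi
      rw [walkCount_succ h, ih _ (by omega), ih _ (by omega), ih _ (by omega)]
    · simp [walkCount, h]

namespace ThreeQuadrantWalk

noncomputable def rowPoly (j : ℤ) (n : ℕ) : LaurentPolynomial ℂ :=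
  ∑ i ∈ Finset.Icc (-(n : ℤ)) n, C (walkCount n i j : ℂ) * T i

noncomputable def halfRowPoly (j : ℤ) (n : ℕ) : LaurentPolynomial ℂ :=
  ∑ i ∈ Finset.range (n + 1), C (walkCount n i j : ℂ) * T (i : ℤ)

theorem Hp_eq_mk : Hp = PowerSeries.mk (halfRowPoly 0) := rfl

theorem Hpm1_eq_mk : Hpm1 = PowerSeries.mk (halfRowPoly (-1)) := rfl

theorem coeff_rowPoly (j : ℤ) (n : ℕ) (k : ℤ) : (rowPoly j n).coeff k = walkCount n k j := by
  rw [rowPoly, coeff_sum_C_mul_T]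
  split_ifs with hk
  · rfl
  · rw [walkCount_eq_zero_of_notMem_Icc j hk, Nat.cast_zero]

theorem coeff_halfRowPoly (j : ℤ) (n : ℕ) (k : ℤ) :
    (halfRowPoly j n).coeff k = if 0 ≤ k then (walkCount n k j : ℂ) else 0 := by
  rw [halfRowPoly, coeff_sum_C_mul_T_natCast]
  by_cases hk : 0 ≤ k ∧ k ≤ n
  · rw [if_pos ⟨hk.1, Finset.mem_range.mpr (by omega)⟩, if_pos hk.1, Int.toNat_of_nonneg hk.1]
  rw [if_neg (by rw [Finset.mem_range]; omega)]
  split_ifs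
  · rw [walkCount_eq_zero_of_notMem_Icc j (by rw [Finset.mem_Icc]; omega), Nat.cast_zero]
  · rfl

theorem coeff_halfRowPoly_of_neg {j : ℤ} (hj : j < 0) (n : ℕ) (k : ℤ) :
    (halfRowPoly j n).coeff k = walkCount n k j := by
  rw [coeff_halfRowPoly]
  split_ifs with hk
  · rfl
  · rw [walkCount_eq_zero_of_neg_of_neg n (not_le.mp hk) hj, Nat.cast_zero]

theorem rowPoly_succ {j : ℤ} (hj : 1 ≤ j) (n : ℕ) :
    rowPoly j (n + 1) = (T 1 + T (-1)) * rowPoly (j - 1) n + rowPoly (j + 1) n := by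
  ext k
  simp only [AddMonoidAlgebra.coeff_add, Finsupp.add_apply, add_mul, coeff_T_one_mul,
    coeff_T_neg_one_mul, coeff_rowPoly, walkCount_succ (Or.inr (by omega : 0 ≤ j))]
  push_cast; ring

theorem rowPoly_zero_succ (n : ℕ) :
    rowPoly 0 (n + 1) = (T 1 + T (-1)) * halfRowPoly (-1) n + rowPoly 1 n := by
  ext k
  simp only [AddMonoidAlgebra.coeff_add, Finsupp.add_apply, add_mul, coeff_T_one_mul,
    coeff_T_neg_one_mul, coeff_rowPoly, coeff_halfRowPoly_of_neg neg_one_lt_zero,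
    walkCount_succ (Or.inr le_rfl)]
  push_cast; ring_nf

theorem halfRowPoly_succ {j : ℤ} (hj : j ≤ -1) (n : ℕ) :
    halfRowPoly j (n + 1) = (T 1 + T (-1)) * halfRowPoly (j - 1) n
      - C (walkCount n 0 (j - 1) : ℂ) * T (-1) + halfRowPoly (j + 1) n := by
  ext k
  simp only [AddMonoidAlgebra.coeff_add, AddMonoidAlgebra.coeff_sub, Finsupp.add_apply,
    Finsupp.sub_apply, add_mul, coeff_T_one_mul, coeff_T_neg_one_mul, coeff_C_mul_T,
    coeff_halfRowPoly]
  obtain hk | rfl | rfl | hk : k < -1 ∨ k = -1 ∨ k = 0 ∨ 0 < k := by omega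
  · rw [if_neg (by omega), if_neg (by omega), if_neg (by omega), if_neg (by omega),
      if_neg (by omega)]
    ring
  · simp
  · rw [walkCount_succ (Or.inl le_rfl), walkCount_eq_zero_of_neg_of_neg n (by norm_num) (by omega)]
    simp
  · rw [if_pos hk.le, walkCount_succ (Or.inl hk.le), if_pos (by omega), if_pos (by omega),
      if_neg (by omega), if_pos hk.le]
    push_cast; ring

/-- This antisymmetrisation kills the boundary term `c·x⁻¹` of `halfRowPoly_succ`. -/
noncomputable def skew (p : LaurentPolynomial ℂ) : LaurentPolynomial ℂ :=
  T 1 * p - T (-1) * invert p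

theorem skew_halfRowPoly_succ {j : ℤ} (hj : j ≤ -1) (n : ℕ) :
    skew (halfRowPoly j (n + 1))
      = (T 1 + T (-1)) * skew (halfRowPoly (j - 1) n) + skew (halfRowPoly (j + 1) n) := by
  rw [halfRowPoly_succ hj]
  simp only [skew, map_add, map_sub, map_mul, invert_T, invert_C, neg_neg]
  ring

noncomputable def lineGF (j : ℤ) : PowerSeries (LaurentPolynomial ℂ) :=
  PowerSeries.mk (rowPoly j)

noncomputable def skewGF (j : ℤ) : PowerSeries (LaurentPolynomial ℂ) :=
  PowerSeries.mk fun n => skew (halfRowPoly j n)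

theorem rowPoly_zero (j : ℤ) : rowPoly j 0 = C (walkCount 0 0 j : ℂ) := by
  simp [rowPoly]

theorem lineGF_eq {j : ℤ} (hj : 1 ≤ j) :
    lineGF j
      = PowerSeries.X * (PowerSeries.C (T 1 + T (-1)) * lineGF (j - 1) + lineGF (j + 1)) := by
  rw [lineGF, PowerSeries.mk_eq_C_add_X_mul _ (rowPoly_succ hj), rowPoly_zero,
    walkCount_zero_of_ne_origin (by omega)]
  simp [lineGF]

theorem lineGF_zero_eq :
    lineGF 0 = 1 + PowerSeries.X * (PowerSeries.C (T 1 + T (-1)) * Hpm1 + lineGF 1) := by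
  rw [lineGF, PowerSeries.mk_eq_C_add_X_mul _ rowPoly_zero_succ, rowPoly_zero,
    show walkCount 0 0 0 = 1 from rfl, Nat.cast_one, map_one, map_one]
  rfl

theorem skewGF_eq {j : ℤ} (hj : j ≤ -1) :
    skewGF j
      = PowerSeries.X * (PowerSeries.C (T 1 + T (-1)) * skewGF (j - 1) + skewGF (j + 1)) := by
  rw [skewGF, PowerSeries.mk_eq_C_add_X_mul _ (skew_halfRowPoly_succ hj)]
  simp [skewGF, skew, halfRowPoly, walkCount_zero_of_ne_origin (by omega : ¬((0 : ℤ) = 0 ∧ j = 0))]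

theorem skewGF_eq_sub (j : ℤ) :
    skewGF j = PowerSeries.C (T 1) * PowerSeries.mk (halfRowPoly j)
      - PowerSeries.C (T (-1)) * inv_x (PowerSeries.mk (halfRowPoly j)) := by
  ext n : 1
  simp [skewGF, skew, coeff_inv_x]

theorem coeff_coeff_Hn (n : ℕ) (k : ℤ) :
    (PowerSeries.coeff n Hn).coeff k = if 0 < k then (walkCount n (-k) 0 : ℂ) else 0 := by
  rw [Hn, PowerSeries.coeff_mk, coeff_sum_C_mul_T_natCast]
  by_cases hk : 0 < k ∧ k ≤ n
  · rw [if_pos ⟨by omega, Finset.mem_Icc.mpr ⟨by omega, by omega⟩⟩, if_pos hk.1,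
      Int.toNat_of_nonneg (by omega)]
  rw [if_neg (by rw [Finset.mem_Icc]; omega)]
  split_ifs
  · rw [walkCount_eq_zero_of_notMem_Icc 0 (by rw [Finset.mem_Icc]; omega), Nat.cast_zero]
  · rfl

theorem lineGF_zero_eq_Hp_add : lineGF 0 = Hp + inv_x Hn := by
  ext n k : 2
  rw [map_add, coeff_inv_x, AddMonoidAlgebra.coeff_add, Finsupp.add_apply, invert_apply,
    coeff_coeff_Hn, neg_neg, lineGF, PowerSeries.coeff_mk, coeff_rowPoly, Hp_eq_mk,
    PowerSeries.coeff_mk, coeff_halfRowPoly]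
  split_ifs <;> first | omega | simp

section Kernel

variable {Y : PowerSeries (LaurentPolynomial ℂ)}
  (hY : Y = PowerSeries.X * (1 + PowerSeries.C (T 1 + T (-1)) * Y ^ 2))
include hY

theorem inv_x_eq_self_of_kernel : inv_x Y = Y := by
  refine PowerSeries.eq_of_eq_X_mul_add_mul_sq ?_ hY
  conv_lhs => rw [hY]
  rw [map_mul, inv_x_X, map_add, map_one, map_mul, inv_x_C_T_add_T_neg, map_pow]

theorem lineGF_one_of_kernel : lineGF 1 = PowerSeries.C (T 1 + T (-1)) * Y * lineGF 0 := by
  have := PowerSeries.eq_pow_mul_of_recurrence (u := fun m : ℕ => lineGF m)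
    (Z := PowerSeries.C (T 1 + T (-1)) * Y) (b := 1)
    (by linear_combination PowerSeries.C (T 1 + T (-1)) * hY)
    (fun m => by
      rw [lineGF_eq (by omega), one_mul]
      push_cast
      ring_nf) 1
  simpa using this

theorem skewGF_neg_one_of_kernel : skewGF (-1) = Y * skewGF 0 := by
  have := PowerSeries.eq_pow_mul_of_recurrence (u := fun m : ℕ => skewGF (-m)) (a := 1) (Z := Y)
    (b := PowerSeries.C (T 1 + T (-1))) (by linear_combination hY)
    (fun m => by
      rw [skewGF_eq (by omega)]
      push_cast
      ring_nf) 1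
  simpa using this

theorem Hp_add_inv_x_Hn_of_kernel :
    Hp + inv_x Hn = 1 + PowerSeries.X * (PowerSeries.C (T 1 + T (-1)) * Hpm1
      + PowerSeries.C (T 1 + T (-1)) * Y * (Hp + inv_x Hn)) := by
  rw [← lineGF_zero_eq_Hp_add, ← lineGF_one_of_kernel hY]
  exact lineGF_zero_eq

theorem inv_x_Hp_add_Hn_of_kernel :
    inv_x Hp + Hn = 1 + PowerSeries.X * (PowerSeries.C (T 1 + T (-1)) * inv_x Hpm1
      + PowerSeries.C (T 1 + T (-1)) * Y * (inv_x Hp + Hn)) := by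
  have h := congrArg inv_x (Hp_add_inv_x_Hn_of_kernel hY)
  simp only [map_add, map_one, map_mul, inv_x_X, inv_x_C, invert_T, neg_neg, inv_x_inv_x,
    inv_x_eq_self_of_kernel hY] at h
  rw [map_add]
  linear_combination h

theorem skew_Hpm1_of_kernel :
    PowerSeries.C (T 1) * Hpm1 - PowerSeries.C (T (-1)) * inv_x Hpm1
      = Y * (PowerSeries.C (T 1) * Hp - PowerSeries.C (T (-1)) * inv_x Hp) := by
  rw [Hp_eq_mk, Hpm1_eq_mk, ← skewGF_eq_sub, ← skewGF_eq_sub]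
  exact skewGF_neg_one_of_kernel hY

end Kernel

end ThreeQuadrantWalk

theorem stmt_16_general (Y₀ : PowerSeries (LaurentPolynomial ℂ))
    (hY₀ : Y₀ = PowerSeries.C (T 1 + T (-1)) * PowerSeries.X * Y₀ ^ 2 + PowerSeries.X) :
    -(PowerSeries.X * PowerSeries.C (T 1) * inv_x Hn)
      + PowerSeries.X * PowerSeries.C (T (-1)) * Hn
      + PowerSeries.C (T 1) * Hpm1
      - PowerSeries.C (T (-1)) * inv_x Hpm1
      + 2 * PowerSeries.X * PowerSeries.C (T (-1)) * inv_x Hp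
      - 2 * PowerSeries.X * PowerSeries.C (T 1) * Hp
      + PowerSeries.C (T 1 - T (-1)) * Y₀ = 0 := by
  have hY : Y₀ = PowerSeries.X * (1 + PowerSeries.C (T 1 + T (-1)) * Y₀ ^ 2) := by
    linear_combination hY₀
  have hH := ThreeQuadrantWalk.Hp_add_inv_x_Hn_of_kernel hY
  have hH' := ThreeQuadrantWalk.inv_x_Hp_add_Hn_of_kernel hY
  have hS := ThreeQuadrantWalk.skew_Hpm1_of_kernel hY
  refine (PowerSeries.isUnit_one_sub_X_mul
    (PowerSeries.C (T 1 + T (-1)) * Y₀)).mul_right_eq_zero.mp ?_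
  set x := PowerSeries.C (R := LaurentPolynomial ℂ) (T 1)
  set x' := PowerSeries.C (R := LaurentPolynomial ℂ) (T (-1))
  rw [map_add] at hH hH' hY ⊢
  rw [map_sub]
  linear_combination (-PowerSeries.X) * (x * hH - x' * hH')
    + (1 - PowerSeries.X * (x + x') * Y₀ - PowerSeries.X ^ 2 * (x + x')) * hS
    + (x * Hp - x' * inv_x Hp + x - x') * hY

/-- The paper's separable linear equation obtained from the null vector of the matrix
cRBVP of the three-quadrant walk: for `Y₀` the unique series with zero constant term
satisfying the kernel equation `Y₀ = t(x+x⁻¹)Y₀² + t`, the identity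
`−t·x·Hn(x⁻¹) + t·x⁻¹·Hn(x) + x·Hp₋₁(x) − x⁻¹·Hp₋₁(x⁻¹) + 2t·x⁻¹·Hp(x⁻¹)
 − 2t·x·Hp(x) + (x − x⁻¹)·Y₀ = 0` holds in `ℂ[x,x⁻¹][[t]]`. -/
theorem stmt_16 (Y₀ : PowerSeries (LaurentPolynomial ℂ))
    (hY₀const : PowerSeries.constantCoeff Y₀ = 0)
    (hY₀ : Y₀ = PowerSeries.C (T 1 + T (-1)) * PowerSeries.X * Y₀ ^ 2 + PowerSeries.X) :
    -(PowerSeries.X * PowerSeries.C (T 1) * inv_x Hn)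
      + PowerSeries.X * PowerSeries.C (T (-1)) * Hn
      + PowerSeries.C (T 1) * Hpm1
      - PowerSeries.C (T (-1)) * inv_x Hpm1
      + 2 * PowerSeries.X * PowerSeries.C (T (-1)) * inv_x Hp
      - 2 * PowerSeries.X * PowerSeries.C (T 1) * Hp
      + PowerSeries.C (T 1 - T (-1)) * Y₀ = 0 :=
  stmt_16_general Y₀ hY₀
end
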